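/- arXiv:2209.01834 — 2 statements merged into one kernel-verified Lean document; each statement's English description precedes it below -/
import Mathlib

section
/- Let n, m ≥ 4, let I_{P_n} ⊆ K[y_S] be the characteristic imset ideal of the path P_n with variables indexed by sets S ⊆ {2, …, n−1} of pairwise non-consecutive integers, let ω be a weight order, and let F be a Gröbner basis for I_{P_n} with respect to ω all of whose elements are weakly Q_{m,n}-homogeneous. Then for every binomial in F of the form y_∅ y_{S_2} ⋯ y_{S_k} − y_{T_1} y_{T_2} ⋯ y_{T_k} with T_i ≠ ∅ for all i, the monomial y_∅ y_{S_2} ⋯ y_{S_k} is the ω-leading term, i.e., y_{T_1} ⋯ y_{T_k} ≤_ω y_∅ y_{S_2} ⋯ y_{S_k}. -/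
open MvPolynomial

/-- The quasi-independence monomial map `φ_Q`, `z_{jk} ↦ x_j y_k`. -/
noncomputable def phiQ (K : Type*) [Field K] {σ τ : Type*} (Q : Set (σ × τ)) :
    MvPolynomial Q K →ₐ[K] MvPolynomial (σ ⊕ τ) K :=
  aeval fun q => X (Sum.inl q.1.1) * X (Sum.inr q.1.2)

/-- The quasi-independence gluing `I ×_Q J := φ_Q⁻¹(I + J)`. -/
noncomputable def QIG (K : Type*) [Field K] {σ τ : Type*} (Q : Set (σ × τ))
    (I : Ideal (MvPolynomial σ K)) (J : Ideal (MvPolynomial τ K)) :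
    Ideal (MvPolynomial Q K) :=
  Ideal.comap (phiQ K Q)
    (Ideal.map (rename (Sum.inl : σ → σ ⊕ τ)) I +
      Ideal.map (rename (Sum.inr : τ → σ ⊕ τ)) J)

/-- Index sets for the Markov equivalence classes of the path `P_n` with vertices
`1, …, n` in path order: sets `S ⊆ {2, …, n-1}` of pairwise non-consecutive integers
(the centers of the v-structures). -/
def PnIdx (n : ℕ) : Set (Finset ℕ) :=
  { S | (∀ i ∈ S, 2 ≤ i ∧ i ≤ n - 1) ∧ ∀ i ∈ S, i + 1 ∉ S }

/-- Index sets for the Markov equivalence classes of the path `P'_m` with vertices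
`n-1, n, n+1, …, n+m-4, 1, 2` in path order: sets of inner vertices (elements of
`{n, …, n+m-4} ∪ {1}`) with no two consecutive in this order. -/
def PmIdx (n m : ℕ) : Set (Finset ℕ) :=
  { S | (∀ i ∈ S, i = 1 ∨ (n ≤ i ∧ i ≤ n + m - 4)) ∧ (∀ i ∈ S, i + 1 ∉ S) ∧
      ¬ (n + m - 4 ∈ S ∧ 1 ∈ S) }

/-- Index sets for the Markov equivalence classes of the cycle `C_N` with vertices
`1, …, N`: nonempty sets of pairwise cyclically non-consecutive integers mod `N`. -/
def CIdx (N : ℕ) : Set (Finset ℕ) :=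
  { S | S.Nonempty ∧ (∀ i ∈ S, 1 ≤ i ∧ i ≤ N) ∧
      ∀ i ∈ S, ∀ j ∈ S, ((i : ZMod N) + 1 ≠ (j : ZMod N)) }

/-- The cyclic successor of a vertex `i ∈ {1, …, N}`. -/
def nxt (N i : ℕ) : ℕ := if i = N then 1 else i + 1

/-- The cyclic predecessor of a vertex `i ∈ {1, …, N}`. -/
def prv (N i : ℕ) : ℕ := if i = 1 then N else i - 1

/-- The triple `{i - 1, i, i + 1}` (cyclically mod `N`, with representatives in
`{1, …, N}`); `c(S) = 1` for such `S` exactly when `i` is the center of a collider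
`i-1 → i ← i+1`. -/
def trip (N i : ℕ) : Finset ℕ := {prv N i, i, nxt N i}

/-- The monomial map of the characteristic imset ideal of the path `P_n` (inside the
cycle with `N` vertices): `y_S ↦ ∏_{W : c(W)=1} t_W`, where `c(W) = 1` exactly for the
edges `{i, i+1}` of `P_n` and the triples centered at the elements of `S`. -/
noncomputable def psiPn (K : Type*) [Field K] (n N : ℕ) :
    MvPolynomial (PnIdx n) K →ₐ[K] MvPolynomial (Finset ℕ) K :=
  aeval fun S =>
    (∏ i ∈ Finset.Icc 1 (n - 1), X ({i, i + 1} : Finset ℕ)) * ∏ i ∈ S.1, X (trip N i)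

/-- The monomial map of the characteristic imset ideal of the path `P'_m` with
vertices `n-1, n, …, n+m-4, 1, 2` (inside the cycle with `N = n + m - 4` vertices). -/
noncomputable def psiPm (K : Type*) [Field K] (n m : ℕ) :
    MvPolynomial (PmIdx n m) K →ₐ[K] MvPolynomial (Finset ℕ) K :=
  aeval fun S =>
    (∏ i ∈ insert 1 (Finset.Icc (n - 1) (n + m - 4)),
        X ({i, nxt (n + m - 4) i} : Finset ℕ)) * ∏ i ∈ S.1, X (trip (n + m - 4) i)

/-- The monomial map of the characteristic imset ideal of the cycle `C_N`. -/
noncomputable def psiC (K : Type*) [Field K] (N : ℕ) :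
    MvPolynomial (CIdx N) K →ₐ[K] MvPolynomial (Finset ℕ) K :=
  aeval fun S =>
    (∏ i ∈ Finset.Icc 1 N, X ({i, nxt N i} : Finset ℕ)) * ∏ i ∈ S.1, X (trip N i)

/-- The gluing rule `Q_{m,n}`: pairs `(S', S)` such that no two elements of `S' ∪ S`
are cyclically consecutive modulo `n + m - 4` and `S' ∪ S ≠ ∅` (equivalently, the two
patterns have no v-structures at cyclically consecutive vertices and at least one
v-structure occurs). -/
def Qmn (n m : ℕ) : Set (↥(PmIdx n m) × ↥(PnIdx n)) :=
  { q | (q.1.1 ∪ q.2.1 : Finset ℕ).Nonempty ∧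
      ∀ i ∈ (q.1.1 ∪ q.2.1 : Finset ℕ), ∀ j ∈ (q.1.1 ∪ q.2.1 : Finset ℕ),
        ((i : ZMod (n + m - 4)) + 1 ≠ (j : ZMod (n + m - 4))) }


/-- The `ω`-weight of an exponent vector. -/
noncomputable def wt {σ : Type*} (ω : σ → ℝ) (u : σ →₀ ℕ) : ℝ :=
  u.sum fun i e => ω i * e

open scoped Classical in
/-- The initial form `init_ω(f)`: the sum of the terms of `f` of maximal `ω`-weight. -/
noncomputable def initForm {σ K : Type*} [Field K] (ω : σ → ℝ) (f : MvPolynomial σ K) :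
    MvPolynomial σ K :=
  ∑ u ∈ f.support.filter (fun u => ∀ v ∈ f.support, wt ω v ≤ wt ω u),
    monomial u (f.coeff u)

/-- The initial ideal `init_ω(I)`. -/
noncomputable def initIdeal {σ K : Type*} [Field K] (ω : σ → ℝ)
    (I : Ideal (MvPolynomial σ K)) : Ideal (MvPolynomial σ K) :=
  Ideal.span { g | ∃ f ∈ I, f ≠ 0 ∧ g = initForm ω f }

/-- `j : Fin d → σ` is a listing of the degree-`d` exponent vector `u`. -/
def IsListing {σ : Type*} (d : ℕ) (j : Fin d → σ) (u : σ →₀ ℕ) : Prop :=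
  u = ∑ ℓ : Fin d, Finsupp.single (j ℓ) 1

/-- Weak `Q`-homogeneity with respect to `ω` for a polynomial in the second (`y`) set
of variables of `Q ⊆ σ × τ`: the initial form is a single term, and every tuple of
first-factor indices lifting (a listing of) the leading monomial also lifts (a
suitable reordering of) every other monomial. -/
noncomputable def WeaklyQHomSnd {σ τ K : Type*} [Field K] (Q : Set (σ × τ)) (ω : τ → ℝ)
    (g : MvPolynomial τ K) : Prop :=
  ∃ (d : ℕ) (u₀ : τ →₀ ℕ) (c : K) (k₀ : Fin d → τ),
    initForm ω g = monomial u₀ c ∧ c ≠ 0 ∧ IsListing d k₀ u₀ ∧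
    ∀ u ∈ g.support, ∃ k' : Fin d → τ, IsListing d k' u ∧
      ∀ j : Fin d → σ, (∀ ℓ, (j ℓ, k₀ ℓ) ∈ Q) → ∀ ℓ, (j ℓ, k' ℓ) ∈ Q

open scoped Classical in
lemma coeff_initForm_aux {σ K : Type*} [Field K] (ω : σ → ℝ) (f : MvPolynomial σ K)
    (u : σ →₀ ℕ) :
    coeff u (initForm ω f) =
      if u ∈ f.support.filter (fun u => ∀ v ∈ f.support, wt ω v ≤ wt ω u)
      then coeff u f else 0 := by
  rw [initForm, coeff_sum]
  simp [coeff_monomial]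

lemma listing_mem_aux {β : Type*} {d e : ℕ} (f : Fin d → β) (g : Fin e → β)
    (h : (∑ i, Finsupp.single (f i) 1 : β →₀ ℕ) = ∑ j, Finsupp.single (g j) 1)
    (i : Fin d) : ∃ j, g j = f i := by
  classical
  by_contra hc
  push_neg at hc
  have h1 : (∑ j, Finsupp.single (g j) 1 : β →₀ ℕ) (f i) = 0 := by
    rw [Finsupp.finset_sum_apply]
    refine Finset.sum_eq_zero fun j _ => ?_
    rw [Finsupp.single_apply, if_neg (hc j)]
  have h2 : 0 < (∑ i', Finsupp.single (f i') 1 : β →₀ ℕ) (f i) := by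
    rw [Finsupp.finset_sum_apply]
    refine Finset.sum_pos' (fun _ _ => Nat.zero_le _) ⟨i, Finset.mem_univ i, ?_⟩
    simp [Finsupp.single_apply]
  rw [h, h1] at h2
  exact lt_irrefl 0 h2

lemma prod_X_eq_aux {σ K : Type*} [Field K] {d : ℕ} (v : Fin d → σ) :
    (∏ i, X (v i) : MvPolynomial σ K) = monomial (∑ i, Finsupp.single (v i) 1) 1 := by
  rw [monomial_sum_one]
  rfl

/-- if `F` is a Gröbner basis of `I_{P_n}` with respect to the weight
`ω` all of whose elements are weakly `Q_{m,n}`-homogeneous, then every binomial of `F`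
of the form `y_∅ y_{S_2} ⋯ y_{S_k} - y_{T_1} ⋯ y_{T_k}` with all `T_i ≠ ∅` has
`y_∅ y_{S_2} ⋯ y_{S_k}` as its `ω`-leading term, i.e. the `ω`-weight of the trailing
monomial is at most that of the leading one. -/
theorem stmt16 (K : Type*) [Field K] (n m : ℕ) (hn : 4 ≤ n) (hm : 4 ≤ m)
    (ω : ↥(PnIdx n) → ℝ) (F : Set (MvPolynomial (PnIdx n) K))
    (hFsub : F ⊆ (RingHom.ker (psiPn K n (n + m - 4)) :
      Set (MvPolynomial (PnIdx n) K)))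
    (hFmon : ∀ f ∈ F, ∃ u c, initForm ω f = monomial u c)
    (hFgb : Ideal.span (initForm ω '' F) =
      initIdeal ω (RingHom.ker (psiPn K n (n + m - 4))))
    (hFqh : ∀ f ∈ F, WeaklyQHomSnd (Qmn n m) ω f)
    (k : ℕ) (Sv Tv : Fin (k + 1) → ↥(PnIdx n))
    (hS0 : (Sv 0).1 = (∅ : Finset ℕ))
    (hT : ∀ i, (Tv i).1 ≠ (∅ : Finset ℕ))
    (hf : ((∏ i, X (Sv i)) - ∏ i, X (Tv i) : MvPolynomial (PnIdx n) K) ∈ F) :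
    wt ω (∑ i, Finsupp.single (Tv i) 1) ≤ wt ω (∑ i, Finsupp.single (Sv i) 1) := by
  classical
  by_contra hlt
  push_neg at hlt
  set N := n + m - 4 with hN
  haveI : NeZero N := ⟨by omega⟩
  set uS : (↥(PnIdx n)) →₀ ℕ := ∑ i, Finsupp.single (Sv i) 1 with huS
  set uT : (↥(PnIdx n)) →₀ ℕ := ∑ i, Finsupp.single (Tv i) 1 with huT
  set f : MvPolynomial (PnIdx n) K := (∏ i, X (Sv i)) - ∏ i, X (Tv i) with hfdef
  have hne : uS ≠ uT := by
    intro h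
    rw [h] at hlt
    exact lt_irrefl _ hlt
  have hcoeff : ∀ u, coeff u f =
      (if uS = u then (1 : K) else 0) - (if uT = u then 1 else 0) := by
    intro u
    rw [hfdef, coeff_sub, prod_X_eq_aux, prod_X_eq_aux, coeff_monomial, coeff_monomial]
  have hcS : coeff uS f = 1 := by
    rw [hcoeff, if_pos rfl, if_neg (Ne.symm hne)]; ring
  have hcT : coeff uT f = -1 := by
    rw [hcoeff, if_neg hne, if_pos rfl]; ring
  have hSsupp : uS ∈ f.support := by
    rw [MvPolynomial.mem_support_iff, hcS]; exact one_ne_zero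
  have hTsupp : uT ∈ f.support := by
    rw [MvPolynomial.mem_support_iff, hcT]; exact neg_ne_zero.mpr one_ne_zero
  have hsupp : ∀ u ∈ f.support, u = uS ∨ u = uT := by
    intro u hu
    rw [MvPolynomial.mem_support_iff, hcoeff] at hu
    by_contra hc
    push_neg at hc
    rw [if_neg (fun h => hc.1 h.symm), if_neg (fun h => hc.2 h.symm), sub_zero] at hu
    exact hu rfl
  obtain ⟨d, u₀, c, k₀, h1, hc0, h3, h4⟩ := hFqh f hf
  -- identify u₀ = uT
  have hcu₀ : coeff u₀ (initForm ω f) = c := by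
    rw [h1, coeff_monomial, if_pos rfl]
  have hu₀mem : u₀ ∈ f.support.filter (fun u => ∀ v ∈ f.support, wt ω v ≤ wt ω u) := by
    by_contra hc
    rw [coeff_initForm_aux, if_neg hc] at hcu₀
    exact hc0 hcu₀.symm
  have hu₀T : u₀ = uT := by
    rcases hsupp u₀ (Finset.mem_filter.mp hu₀mem).1 with h | h
    · exfalso
      have := (Finset.mem_filter.mp hu₀mem).2 uT hTsupp
      rw [h] at this
      exact absurd hlt (not_lt.mpr this)
    · exact h
  -- the listing of uT
  have hk₀list : uT = ∑ ℓ : Fin d, Finsupp.single (k₀ ℓ) 1 := by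
    rw [← hu₀T]; exact h3
  obtain ⟨k', hk'list, hP⟩ := h4 uS hSsupp
  -- the empty pattern in PmIdx
  have hEmem : (∅ : Finset ℕ) ∈ PmIdx n m := by
    refine ⟨fun i hi => absurd hi (Finset.notMem_empty i), fun i hi => absurd hi (Finset.notMem_empty i), ?_⟩
    rintro ⟨h, -⟩
    exact Finset.notMem_empty _ h
  set E : ↥(PmIdx n m) := ⟨∅, hEmem⟩ with hE
  have hJ : ∀ ℓ : Fin d, ((E, k₀ ℓ) : ↥(PmIdx n m) × ↥(PnIdx n)) ∈ Qmn n m := by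
    intro ℓ
    obtain ⟨i, hi⟩ := listing_mem_aux k₀ Tv (by rw [← hk₀list, huT]) ℓ
    constructor
    · rw [hE]
      simp only [Finset.empty_union]
      rw [← hi]
      exact Finset.nonempty_iff_ne_empty.mpr (hT i)
    · intro a ha b hb heq
      simp only [hE, Finset.empty_union] at ha hb
      obtain ⟨hbounds, hnoncons⟩ := (k₀ ℓ).2
      obtain ⟨ha2, han⟩ := hbounds a ha
      obtain ⟨hb2, hbn⟩ := hbounds b hb
      -- from heq deduce a + 1 = b in ℕ
      have hcast : (((a + 1 : ℕ) : ZMod (n + m - 4))) = ((b : ℕ) : ZMod (n + m - 4)) := by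
        push_cast
        exact heq
      have hval := congrArg ZMod.val hcast
      rw [ZMod.val_natCast, ZMod.val_natCast] at hval
      have haN : a + 1 ≤ N := by omega
      have hbN : b < N := by omega
      rw [Nat.mod_eq_of_lt hbN] at hval
      rcases lt_or_eq_of_le haN with hlt' | heqN
      · rw [Nat.mod_eq_of_lt hlt'] at hval
        exact hnoncons a ha (hval ▸ hb)
      · rw [heqN, Nat.mod_self] at hval
        omega
  have hQ' := hP (fun _ => E) hJ
  obtain ⟨ℓ₀, hℓ₀⟩ := listing_mem_aux Sv k' (by rw [← huS, hk'list]) 0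
  have := (hQ' ℓ₀).1
  rw [hℓ₀, hE] at this
  simp only [Finset.empty_union, hS0] at this
  exact Finset.not_nonempty_empty this
end

section
/- Let n ≥ 6, m = 4, and Q_n = Q_{4,n}. The binomial y_{\{n−1\}} y_{\{2,4\}} − y_{\{2,n−1\}} y_{\{4\}} lies in I_{P_n}, and it is not weakly Q_n-homogeneous with respect to any weight ω for which y_{\{n−1\}} y_{\{2,4\}} is the ω-leading term: the leading monomial lifts by the tuple of first-factor indices ({1}, {n}) (i.e., ({1}, {n−1}) ∈ Q_n and ({n}, {2,4}) ∈ Q_n), but the trailing monomial y_{\{2,n−1\}} y_{\{4\}} does not lift by this tuple in any order. Consequently, for n ≥ 6 no Gröbner basis of I_{P_n} produced by the iterated quasi-independence gluing construction (which contains both y_∅ y_{\{2,4\}} − y_{\{2\}} y_{\{4\}} and y_{\{n−1\}} y_{\{2,4\}} − y_{\{2,n−1\}} y_{\{4\}} with the first monomial of each as leading term) is weakly Q_n-homogeneous. -/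
open MvPolynomial

section Aux

lemma aux_mod (n x : ℕ) (hn : 1 ≤ n) (hx : x < n + n) :
    x % n = if n ≤ x then x - n else x := by
  split_ifs with h
  · rw [Nat.mod_eq_sub_mod h, Nat.mod_eq_of_lt (by omega)]
  · exact Nat.mod_eq_of_lt (by omega)

lemma aux_zne1 {n a b : ℕ} (h : (a + 1) % n ≠ b % n) :
    (a : ZMod n) + 1 ≠ (b : ZMod n) := by
  have he : ((a : ZMod n) + 1) = ((a + 1 : ℕ) : ZMod n) := by push_cast; ring
  rw [he, Ne, ZMod.natCast_eq_natCast_iff']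
  exact h

lemma aux_zeq1 {n a b : ℕ} (h : (a + 1) % n = b % n) :
    (a : ZMod n) + 1 = (b : ZMod n) := by
  have he : ((a : ZMod n) + 1) = ((a + 1 : ℕ) : ZMod n) := by push_cast; ring
  rw [he, ZMod.natCast_eq_natCast_iff']
  exact h

end Aux

/-- for `n ≥ 6` and `m = 4` (so `Q_n = Q_{4,n}` and the cycle has `n`
vertices), the binomial `y_{{n-1}} y_{{2,4}} - y_{{2,n-1}} y_{{4}}` lies in
`I_{P_n}`; its leading monomial lifts by the tuple `({1}, {n})` of first-factor
indices, but its trailing monomial does not lift by this tuple in either order.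
Consequently it is not weakly `Q_n`-homogeneous for any weight making
`y_{{n-1}} y_{{2,4}}` the leading term, and no Gröbner basis of `I_{P_n}` produced by
the iterated quasi-independence gluing construction (which contains both
`y_∅ y_{{2,4}} - y_{{2}} y_{{4}}` and `y_{{n-1}} y_{{2,4}} - y_{{2,n-1}} y_{{4}}`,
with the first monomial of each as its leading term) is weakly
`Q_n`-homogeneous. -/
theorem stmt18 (K : Type*) [Field K] (n : ℕ) (hn : 6 ≤ n)
    (hE : (∅ : Finset ℕ) ∈ PnIdx n) (h2 : ({2} : Finset ℕ) ∈ PnIdx n)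
    (h4 : ({4} : Finset ℕ) ∈ PnIdx n) (h24 : ({2, 4} : Finset ℕ) ∈ PnIdx n)
    (hN1 : ({n - 1} : Finset ℕ) ∈ PnIdx n)
    (h2N1 : ({2, n - 1} : Finset ℕ) ∈ PnIdx n)
    (h1m : ({1} : Finset ℕ) ∈ PmIdx n 4) (hnm : ({n} : Finset ℕ) ∈ PmIdx n 4) :
    ∀ f₁ f₂ : MvPolynomial (PnIdx n) K,
      f₁ = X (⟨∅, hE⟩ : ↥(PnIdx n)) * X ⟨{2, 4}, h24⟩ -
            X (⟨{2}, h2⟩ : ↥(PnIdx n)) * X ⟨{4}, h4⟩ →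
      f₂ = X (⟨{n - 1}, hN1⟩ : ↥(PnIdx n)) * X ⟨{2, 4}, h24⟩ -
            X (⟨{2, n - 1}, h2N1⟩ : ↥(PnIdx n)) * X ⟨{4}, h4⟩ →
      (f₂ ∈ RingHom.ker (psiPn K n (n + 4 - 4)) ∧
      ((⟨⟨{1}, h1m⟩, ⟨{n - 1}, hN1⟩⟩ ∈ Qmn n 4) ∧
        (⟨⟨{n}, hnm⟩, ⟨{2, 4}, h24⟩⟩ ∈ Qmn n 4)) ∧
      (¬ ((⟨⟨{1}, h1m⟩, ⟨{2, n - 1}, h2N1⟩⟩ ∈ Qmn n 4) ∧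
          (⟨⟨{n}, hnm⟩, ⟨{4}, h4⟩⟩ ∈ Qmn n 4)) ∧
       ¬ ((⟨⟨{n}, hnm⟩, ⟨{2, n - 1}, h2N1⟩⟩ ∈ Qmn n 4) ∧
          (⟨⟨{1}, h1m⟩, ⟨{4}, h4⟩⟩ ∈ Qmn n 4))) ∧
      (∀ ω : ↥(PnIdx n) → ℝ,
        initForm ω f₂ =
          monomial (Finsupp.single (⟨{n - 1}, hN1⟩ : ↥(PnIdx n)) 1 +
            Finsupp.single (⟨{2, 4}, h24⟩ : ↥(PnIdx n)) 1) (1 : K) →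
        ¬ WeaklyQHomSnd (Qmn n 4) ω f₂) ∧
      (∀ (ω : ↥(PnIdx n) → ℝ) (F : Set (MvPolynomial (PnIdx n) K)),
        f₁ ∈ F → f₂ ∈ F →
        initForm ω f₁ =
          monomial (Finsupp.single (⟨∅, hE⟩ : ↥(PnIdx n)) 1 +
            Finsupp.single (⟨{2, 4}, h24⟩ : ↥(PnIdx n)) 1) (1 : K) →
        initForm ω f₂ =
          monomial (Finsupp.single (⟨{n - 1}, hN1⟩ : ↥(PnIdx n)) 1 +
            Finsupp.single (⟨{2, 4}, h24⟩ : ↥(PnIdx n)) 1) (1 : K) →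
        ¬ ∀ g ∈ F, WeaklyQHomSnd (Qmn n 4) ω g)) := by
  intro f₁ f₂ hf₁ hf₂
  classical
  -- abbreviations
  set A : ↥(PnIdx n) := ⟨{n - 1}, hN1⟩ with hA
  set B : ↥(PnIdx n) := ⟨{2, 4}, h24⟩ with hB
  set C : ↥(PnIdx n) := ⟨{2, n - 1}, h2N1⟩ with hC
  set D : ↥(PnIdx n) := ⟨{4}, h4⟩ with hD
  have hAB : A ≠ B := by
    intro h
    have h' : ({n - 1} : Finset ℕ) = {2, 4} := congrArg Subtype.val h
    have : (2 : ℕ) ∈ ({n - 1} : Finset ℕ) := h' ▸ (by simp)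
    simp only [Finset.mem_singleton] at this
    omega
  have hCA : C ≠ A := by
    intro h
    have h' : ({2, n - 1} : Finset ℕ) = {n - 1} := congrArg Subtype.val h
    have : (2 : ℕ) ∈ ({n - 1} : Finset ℕ) := h' ▸ (by simp)
    simp only [Finset.mem_singleton] at this
    omega
  have hDA : D ≠ A := by
    intro h
    have h' : ({4} : Finset ℕ) = {n - 1} := congrArg Subtype.val h
    have : (4 : ℕ) ∈ ({n - 1} : Finset ℕ) := h' ▸ (by simp)
    simp only [Finset.mem_singleton] at this
    omega
  have hDC : D ≠ C := by
    intro h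
    have h' : ({4} : Finset ℕ) = {2, n - 1} := congrArg Subtype.val h
    have : (2 : ℕ) ∈ ({4} : Finset ℕ) := h' ▸ (by simp)
    simp only [Finset.mem_singleton] at this
    omega
  -- part 1 : kernel membership
  have part1 : f₂ ∈ RingHom.ker (psiPn K n (n + 4 - 4)) := by
    rw [RingHom.mem_ker, hf₂, map_sub, map_mul, map_mul]
    simp only [psiPn, aeval_X]
    have h24' : (2 : ℕ) ∉ ({4} : Finset ℕ) := by simp
    have h2n' : (2 : ℕ) ∉ ({n - 1} : Finset ℕ) := by simp; omega
    rw [Finset.prod_insert h24', Finset.prod_insert h2n']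
    simp only [Finset.prod_singleton, hA, hD]
    ring
  -- Qmn memberships
  have hQ1A : (⟨⟨{1}, h1m⟩, A⟩ : ↥(PmIdx n 4) × ↥(PnIdx n)) ∈ Qmn n 4 := by
    refine ⟨⟨1, by simp⟩, ?_⟩
    intro i hi j hj
    simp only [Finset.mem_union, Finset.mem_singleton, hA] at hi hj
    rcases hi with rfl | rfl <;> rcases hj with rfl | rfl <;>
      exact aux_zne1 (by
        rw [aux_mod _ _ (by omega) (by omega), aux_mod _ _ (by omega) (by omega)]
        split_ifs <;> omega)
  have hQnB : (⟨⟨{n}, hnm⟩, B⟩ : ↥(PmIdx n 4) × ↥(PnIdx n)) ∈ Qmn n 4 := by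
    refine ⟨⟨n, by simp⟩, ?_⟩
    intro i hi j hj
    simp only [Finset.mem_union, Finset.mem_singleton, Finset.mem_insert, hB] at hi hj
    rcases hi with rfl | rfl | rfl <;> rcases hj with rfl | rfl | rfl <;>
      exact aux_zne1 (by
        rw [aux_mod _ _ (by omega) (by omega), aux_mod _ _ (by omega) (by omega)]
        split_ifs <;> omega)
  have hnot1C : (⟨⟨{1}, h1m⟩, C⟩ : ↥(PmIdx n 4) × ↥(PnIdx n)) ∉ Qmn n 4 := by
    rintro ⟨-, hcond⟩
    refine hcond 1 (by simp) 2 (by simp [hC]) (aux_zeq1 ?_)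
    norm_num
  have hnotnC : (⟨⟨{n}, hnm⟩, C⟩ : ↥(PmIdx n 4) × ↥(PnIdx n)) ∉ Qmn n 4 := by
    rintro ⟨-, hcond⟩
    refine hcond (n - 1) (by simp [hC]) n (by simp) (aux_zeq1 ?_)
    rw [show n - 1 + 1 = n from by omega]
  -- exponent vectors
  set u₀ : ↥(PnIdx n) →₀ ℕ := Finsupp.single A 1 + Finsupp.single B 1 with hu₀
  set u₁ : ↥(PnIdx n) →₀ ℕ := Finsupp.single C 1 + Finsupp.single D 1 with hu₁
  have hu₀A : u₀ A = 1 := by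
    rw [hu₀, Finsupp.add_apply, Finsupp.single_apply, Finsupp.single_apply,
      if_pos rfl, if_neg (show ¬(B = A) from fun h => hAB h.symm)]
    norm_num
  have hu₁A : u₁ A = 0 := by
    rw [hu₁, Finsupp.add_apply, Finsupp.single_apply, Finsupp.single_apply,
      if_neg (show ¬(C = A) from hCA), if_neg (show ¬(D = A) from hDA)]
    norm_num
  have hu₀u₁ : u₀ ≠ u₁ := by
    intro h
    have := congrArg (fun u => u A) h
    simp only [hu₀A, hu₁A] at this
    exact one_ne_zero this
  have hu₁C : u₁ C = 1 := by
    rw [hu₁, Finsupp.add_apply, Finsupp.single_apply, Finsupp.single_apply,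
      if_pos rfl, if_neg (show ¬(D = C) from hDC)]
    norm_num
  -- u₁ belongs to the support of f₂
  have hXX : ∀ (a b : ↥(PnIdx n)),
      (X a * X b : MvPolynomial (PnIdx n) K) =
        monomial (Finsupp.single a 1 + Finsupp.single b 1) 1 := by
    intro a b
    rw [X, X, monomial_mul, one_mul]
  have hsupp : u₁ ∈ f₂.support := by
    rw [hf₂, mem_support_iff, coeff_sub, hXX, hXX, coeff_monomial, coeff_monomial,
      if_neg hu₀u₁, if_pos rfl]
    simp
  -- part 4 : not weakly Q-homogeneous
  have part4 : ∀ ω : ↥(PnIdx n) → ℝ,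
      initForm ω f₂ = monomial u₀ (1 : K) → ¬ WeaklyQHomSnd (Qmn n 4) ω f₂ := by
    intro ω hinit hW
    obtain ⟨d, u₀', c, k₀, hIF, hc, hlist, hall⟩ := hW
    rw [hinit] at hIF
    have hu' : u₀' = u₀ := by
      by_contra hne
      have hco := congrArg (coeff u₀') hIF
      rw [coeff_monomial, coeff_monomial, if_neg (fun h => hne h.symm), if_pos rfl] at hco
      exact hc hco.symm
    rw [hu'] at hlist
    have hk₀mem : ∀ ℓ, k₀ ℓ = A ∨ k₀ ℓ = B := by
      intro ℓ
      by_contra hcon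
      push_neg at hcon
      have h1 : u₀ (k₀ ℓ) = 0 := by
        rw [hu₀, Finsupp.add_apply, Finsupp.single_apply, Finsupp.single_apply,
          if_neg (show ¬(A = k₀ ℓ) from fun h => hcon.1 h.symm),
          if_neg (show ¬(B = k₀ ℓ) from fun h => hcon.2 h.symm)]
        norm_num
      rw [hlist] at h1
      rw [Finsupp.finset_sum_apply] at h1
      have := (Finset.sum_eq_zero_iff).mp h1 ℓ (Finset.mem_univ ℓ)
      rw [Finsupp.single_apply, if_pos rfl] at this
      exact one_ne_zero this
    obtain ⟨k', hk'list, hk'lift⟩ := hall u₁ hsupp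
    set j : Fin d → ↥(PmIdx n 4) :=
      fun ℓ => if k₀ ℓ = A then ⟨{1}, h1m⟩ else ⟨{n}, hnm⟩ with hj
    have hjeq : ∀ ℓ, (k₀ ℓ = A → j ℓ = ⟨{1}, h1m⟩) ∧
        (k₀ ℓ ≠ A → j ℓ = ⟨{n}, hnm⟩) := by
      intro ℓ
      refine ⟨fun h => ?_, fun h => ?_⟩
      · simp only [hj]; exact if_pos h
      · simp only [hj]; exact if_neg h
    have hjlift : ∀ ℓ, (j ℓ, k₀ ℓ) ∈ Qmn n 4 := by
      intro ℓ
      rcases hk₀mem ℓ with h | h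
      · rw [(hjeq ℓ).1 h, h]; exact hQ1A
      · rw [(hjeq ℓ).2 (fun he => hAB (he.symm.trans h)), h]; exact hQnB
    have hall' := hk'lift j hjlift
    have hex : ∃ ℓ, k' ℓ = C := by
      by_contra hnone
      push_neg at hnone
      have h0 : u₁ C = 0 := by
        rw [hk'list, Finsupp.finset_sum_apply]
        exact Finset.sum_eq_zero fun ℓ _ => by
          rw [Finsupp.single_apply, if_neg (hnone ℓ)]
      rw [hu₁C] at h0
      exact one_ne_zero h0
    obtain ⟨ℓC, hℓC⟩ := hex
    have hmem := hall' ℓC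
    rw [hℓC] at hmem
    by_cases h : k₀ ℓC = A
    · rw [(hjeq ℓC).1 h] at hmem
      exact hnot1C hmem
    · rw [(hjeq ℓC).2 h] at hmem
      exact hnotnC hmem
  refine ⟨part1, ⟨hQ1A, hQnB⟩, ⟨fun h => hnot1C h.1, fun h => hnotnC h.1⟩, part4, ?_⟩
  intro ω F hF1 hF2 hi1 hi2 hAll
  exact part4 ω hi2 (hAll f₂ hF2)
end
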